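/- Let φ : M → N be an A-module homomorphism with double φ_D : M_D → N_D. Then φ is the zero homomorphism if and only if φ_D is the zero homomorphism. -/

import Mathlib

/-- The double of a tuple of functions: `h_D := (h ∘ π₁, h ∘ π₂)`. -/
def double {k X ι : Type} (h : ι → X → k) :
    (ι → X × X → k) × (ι → X × X → k) :=
  (fun i => h i ∘ Prod.fst, fun i => h i ∘ Prod.snd)

/-- The double of a submodule `M ⊆ A^ι`: the `B`-submodule of `B^{2ι}`
generated by the doubles of elements of `M`, where `A = X → k`, `B = X × X → k`. -/
def doubleSub {k X ι : Type} [CommRing k] (M : Submodule (X → k) (ι → X → k)) :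
    Submodule (X × X → k) ((ι → X × X → k) × (ι → X × X → k)) :=
  Submodule.span (X × X → k) (double '' (M : Set (ι → X → k)))

lemma mem_doubleSub {k X ι : Type} [CommRing k] {M : Submodule (X → k) (ι → X → k)}
    {h : ι → X → k} (hm : h ∈ M) : double h ∈ doubleSub M :=
  Submodule.subset_span ⟨h, hm, rfl⟩

theorem LinearMap.ext_span {R M N : Type*} [Semiring R] [AddCommMonoid M] [Module R M]
    [AddCommMonoid N] [Module R N] {s : Set M} {f g : Submodule.span R s →ₗ[R] N}
    (h : ∀ x (hx : x ∈ s), f ⟨x, Submodule.subset_span hx⟩ = g ⟨x, Submodule.subset_span hx⟩) :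
    f = g :=
  LinearMap.ext_on Submodule.span_span_coe_preimage fun x hx => h x hx

section double

variable {k X ι : Type}

@[simp]
lemma double_zero [Zero k] : double (0 : ι → X → k) = 0 := rfl

lemma double_injective : Function.Injective (double : (ι → X → k) → _) := by
  intro g h hgh
  funext i x
  simpa [double] using congrFun (congrFun (congrArg Prod.fst hgh) i) (x, x)

@[simp]
lemma double_eq_zero_iff [Zero k] {h : ι → X → k} : double h = 0 ↔ h = 0 :=
  double_injective.eq_iff' double_zero

lemma doubleSub_linearMap_ext [CommRing k] {M : Submodule (X → k) (ι → X → k)}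
    {P : Type*} [AddCommMonoid P] [Module (X × X → k) P] {f g : doubleSub M →ₗ[X × X → k] P}
    (h : ∀ v (hv : v ∈ M), f ⟨double v, mem_doubleSub hv⟩ = g ⟨double v, mem_doubleSub hv⟩) :
    f = g :=
  LinearMap.ext_span (by rintro _ ⟨v, hv, rfl⟩; exact h v hv)

end double

theorem zero_iff_double_zero {k X : Type} [CommRing k] {p q : ℕ}
    (M : Submodule (X → k) (Fin p → X → k)) (N : Submodule (X → k) (Fin q → X → k))
    (φ : M →ₗ[X → k] N)
    (φD : doubleSub M →ₗ[X × X → k] doubleSub N)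
    (hφD : ∀ (h : Fin p → X → k) (hm : h ∈ M),
      φD ⟨double h, mem_doubleSub hm⟩
        = ⟨double (φ ⟨h, hm⟩ : Fin q → X → k), mem_doubleSub (φ ⟨h, hm⟩).2⟩) :
    φ = 0 ↔ φD = 0 := by
  constructor
  · rintro rfl
    refine doubleSub_linearMap_ext fun h hm => ?_
    rw [hφD h hm]
    ext1
    simp
  · intro hD
    ext1 ⟨h, hm⟩
    have hdouble : double (φ ⟨h, hm⟩ : Fin q → X → k) = 0 := by
      simpa [hD] using congrArg Subtype.val (hφD h hm).symm
    exact Subtype.ext (double_eq_zero_iff.mp hdouble)
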